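/- arXiv:2411.12109 — 4 statements merged into one kernel-verified Lean document; each statement's English description precedes it below -/
import Mathlib

section
/- For all s, t ∈ (0, ∞), −log s ≥ −log t + (t − s)/t + (s − t)²/(2·max{s,t}²). -/
open Real Set

private lemma auxB (x : ℝ) (hx : 0 < x) (hx1 : x ≤ 1) :
    -Real.log x ≥ 1 - x + (1 - x) ^ 2 / 2 := by
  set g : ℝ → ℝ := fun y => -Real.log y + y - (1 - y) ^ 2 / 2 with hg
  have key : AntitoneOn g (Icc x 1) := by
    apply antitoneOn_of_deriv_nonpos (convex_Icc x 1)
    · apply ContinuousOn.sub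
      apply ContinuousOn.add
      · exact (Real.continuousOn_log.mono (by
          intro y hy
          simp only [mem_compl_iff, mem_singleton_iff]
          nlinarith [hy.1])).neg
      · exact continuousOn_id
      · fun_prop
    · intro y hy
      rw [interior_Icc] at hy
      have hy0 : 0 < y := lt_trans hx hy.1
      apply DifferentiableAt.differentiableWithinAt
      apply DifferentiableAt.sub
      apply DifferentiableAt.add
      · exact (Real.differentiableAt_log hy0.ne').neg
      · exact differentiableAt_id
      · fun_prop
    · intro y hy
      rw [interior_Icc] at hy
      have hy0 : 0 < y := lt_trans hx hy.1
      have h1 : HasDerivAt g (-y⁻¹ + 1 - 2 * (1 - y) ^ 1 * (0 - 1) / 2) y := by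
        rw [hg]
        exact ((Real.hasDerivAt_log hy0.ne').neg.add (hasDerivAt_id y)).sub
          ((((hasDerivAt_const y (1:ℝ)).sub (hasDerivAt_id y)).pow 2).div_const 2)
      rw [h1.deriv]
      have heq : -y⁻¹ + 1 - 2 * (1 - y) ^ 1 * (0 - 1) / 2 = -((y - 1)^2 / y) := by
        field_simp; ring
      rw [heq, neg_nonpos]
      positivity
  have h := key (left_mem_Icc.mpr hx1) (right_mem_Icc.mpr hx1) hx1
  simp only [hg, Real.log_one] at h
  nlinarith [h]

private lemma auxA (x : ℝ) (hx1 : 1 ≤ x) :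
    Real.log x ≤ x - 1 - (x - 1) ^ 2 / (2 * x ^ 2) := by
  have hx0 : 0 < x := lt_of_lt_of_le one_pos hx1
  set f : ℝ → ℝ := fun y => Real.log y - y + 1/2 - y⁻¹ + y⁻¹ * y⁻¹ / 2 with hf
  have key : AntitoneOn f (Icc 1 x) := by
    apply antitoneOn_of_deriv_nonpos (convex_Icc 1 x)
    · have hsub : Icc (1:ℝ) x ⊆ {0}ᶜ := by
        intro y hy
        simp only [mem_compl_iff, mem_singleton_iff]
        nlinarith [hy.1]
      apply ContinuousOn.add
      apply ContinuousOn.sub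
      apply ContinuousOn.add
      apply ContinuousOn.sub
      · exact Real.continuousOn_log.mono hsub
      · exact continuousOn_id
      · exact continuousOn_const
      · exact (continuousOn_inv₀.mono hsub)
      · exact ((continuousOn_inv₀.mono hsub).mul (continuousOn_inv₀.mono hsub)).div_const 2
    · intro y hy
      rw [interior_Icc] at hy
      have hy0 : 0 < y := lt_trans one_pos hy.1
      apply DifferentiableAt.differentiableWithinAt
      have hinv : DifferentiableAt ℝ (fun y : ℝ => y⁻¹) y := differentiableAt_inv hy0.ne'
      exact ((((Real.differentiableAt_log hy0.ne').sub differentiableAt_id).add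
        (differentiableAt_const _)).sub hinv).add ((hinv.mul hinv).div_const 2)
    · intro y hy
      rw [interior_Icc] at hy
      have hy0 : 0 < y := lt_trans one_pos hy.1
      have hinv : HasDerivAt (fun y : ℝ => y⁻¹) (-(y^2)⁻¹) y := hasDerivAt_inv hy0.ne'
      have h1 : HasDerivAt f
          (y⁻¹ - 1 + 0 - (-(y^2)⁻¹) + ((-(y^2)⁻¹) * y⁻¹ + y⁻¹ * (-(y^2)⁻¹)) / 2) y := by
        rw [hf]
        exact ((((Real.hasDerivAt_log hy0.ne').sub (hasDerivAt_id y)).add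
          (hasDerivAt_const y (1/2 : ℝ))).sub hinv).add ((hinv.mul hinv).div_const 2)
      rw [h1.deriv]
      have heq : y⁻¹ - 1 + 0 - (-(y^2)⁻¹) + ((-(y^2)⁻¹) * y⁻¹ + y⁻¹ * (-(y^2)⁻¹)) / 2
          = -((y - 1)^2 * (y + 1) / y^3) := by
        field_simp; ring
      rw [heq, neg_nonpos]
      have : 0 < y + 1 := by linarith
      positivity
  have h := key (left_mem_Icc.mpr hx1) (right_mem_Icc.mpr hx1) hx1
  simp only [hf, Real.log_one] at h
  have hxx : (x - 1)^2 / (2 * x^2) = 1/2 - x⁻¹ + x⁻¹ * x⁻¹ / 2 := by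
    field_simp; ring
  rw [hxx]
  linarith [h]

/-- For all `s, t ∈ (0, ∞)`,
`-log s ≥ -log t + (t - s)/t + (s - t)² / (2 max{s,t}²)`. -/
theorem stmt2 (s t : ℝ) (hs : 0 < s) (ht : 0 < t) :
    -Real.log s ≥ -Real.log t + (t - s) / t + (s - t) ^ 2 / (2 * max s t ^ 2) := by
  have hlog : Real.log (s / t) = Real.log s - Real.log t := Real.log_div hs.ne' ht.ne'
  rcases le_total s t with h | h
  · rw [max_eq_right h]
    have hx : 0 < s / t := div_pos hs ht
    have hx1 : s / t ≤ 1 := (div_le_one ht).mpr h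
    have key := auxB (s / t) hx hx1
    rw [hlog] at key
    have e1 : 1 - s / t = (t - s) / t := by field_simp
    rw [e1] at key
    have e2 : ((t - s) / t) ^ 2 / 2 = (s - t) ^ 2 / (2 * t ^ 2) := by
      field_simp; ring
    rw [e2] at key
    linarith
  · rw [max_eq_left h]
    have hx1 : 1 ≤ s / t := (one_le_div ht).mpr h
    have key := auxA (s / t) hx1
    rw [hlog] at key
    have e1 : s / t - 1 = (s - t) / t := by field_simp
    rw [e1] at key
    have e2 : ((s - t) / t) ^ 2 / (2 * (s / t) ^ 2) = (s - t) ^ 2 / (2 * s ^ 2) := by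
      rw [div_eq_div_iff (by positivity) (by positivity)]
      field_simp
    rw [e2] at key
    have e3 : (s - t) / t = -((t - s) / t) := by ring
    linarith [key]
end

section
/- Let λ₁, …, λₙ > 0 satisfy ∑ᵢ λᵢ ≤ n. Then ∑ᵢ (−log λᵢ) ≥ (1/(2n²)) · ∑ᵢ (λᵢ − 1)². -/
/-!
Each `λᵢ` lies in `(0, n]`, and on that interval `-log s ≥ (1 - s) + (s - 1)² / (2n²)`.
Summing, the linear terms contribute `n - ∑ λᵢ ≥ 0`. The pointwise bound comes from the
logarithmic series `-log (1 - x) = ∑ xᵏ⁺¹/(k+1)` for `s ≤ 1`, and from `log s ≤ sinh (log s)` for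
`s ≥ 1`.
-/

open Real Finset

lemma one_sub_add_sq_div_two_le_neg_log {s : ℝ} (hs₀ : 0 < s) (hs₁ : s ≤ 1) :
    (1 - s) + (s - 1) ^ 2 / 2 ≤ -log s := by
  have hx : 0 ≤ 1 - s := by linarith
  have hseries := hasSum_pow_div_log_of_abs_lt_one (x := 1 - s)
    (by rw [abs_of_nonneg hx]; linarith)
  have htwo := sum_le_hasSum (range 2) (fun k _ => by positivity) hseries
  simp only [sum_range_succ, sum_range_zero, sub_sub_cancel] at htwo
  norm_num at htwo
  linarith

lemma one_sub_add_sq_div_two_mul_sq_le_neg_log {s : ℝ} (hs : 1 ≤ s) :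
    (1 - s) + (s - 1) ^ 2 / (2 * s ^ 2) ≤ -log s := by
  have hs₀ : 0 < s := by linarith
  have hsinh : log s ≤ (s - s⁻¹) / 2 :=
    sinh_log hs₀ ▸ self_le_sinh_iff.mpr (log_nonneg hs)
  have hcube : (s - s⁻¹) / 2 ≤ (s - 1) - (s - 1) ^ 2 / (2 * s ^ 2) := by
    rw [← sub_nonneg]
    have : (s - 1) - (s - 1) ^ 2 / (2 * s ^ 2) - (s - s⁻¹) / 2 = (s - 1) ^ 3 / (2 * s ^ 2) := by
      field_simp
      ring
    rw [this]
    have : 0 ≤ s - 1 := by linarith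
    positivity
  linarith

lemma one_sub_add_sq_div_le_neg_log {s M : ℝ} (hs : 0 < s) (hsM : s ≤ M) (hM : 1 ≤ M) :
    (1 - s) + (s - 1) ^ 2 / (2 * M ^ 2) ≤ -log s := by
  rcases le_total s 1 with hs₁ | hs₁
  · have : (s - 1) ^ 2 / (2 * M ^ 2) ≤ (s - 1) ^ 2 / 2 :=
      div_le_div_of_nonneg_left (sq_nonneg _) two_pos (by nlinarith)
    linarith [one_sub_add_sq_div_two_le_neg_log hs hs₁]
  · have : (s - 1) ^ 2 / (2 * M ^ 2) ≤ (s - 1) ^ 2 / (2 * s ^ 2) :=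
      div_le_div_of_nonneg_left (sq_nonneg _) (by positivity) (by nlinarith)
    linarith [one_sub_add_sq_div_two_mul_sq_le_neg_log hs₁]

theorem stmt4_general (n : ℕ) (lam : Fin n → ℝ) (hpos : ∀ i, 0 < lam i)
    (hsum : ∑ i, lam i ≤ (n : ℝ)) :
    (1 / (2 * (n : ℝ) ^ 2)) * ∑ i, (lam i - 1) ^ 2 ≤ ∑ i, (-Real.log (lam i)) := by
  have hle : ∀ i, lam i ≤ n := fun i =>
    (single_le_sum (fun j _ => (hpos j).le) (mem_univ i)).trans hsum
  have hlinear : 0 ≤ ∑ i, (1 - lam i) := by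
    simp only [sum_sub_distrib, sum_const, card_univ, Fintype.card_fin, nsmul_one]
    linarith
  calc (1 / (2 * (n : ℝ) ^ 2)) * ∑ i, (lam i - 1) ^ 2
      ≤ ∑ i, (1 - lam i) + ∑ i, (lam i - 1) ^ 2 / (2 * (n : ℝ) ^ 2) := by
        rw [mul_sum]
        simp only [one_div_mul_eq_div]
        linarith
    _ = ∑ i, ((1 - lam i) + (lam i - 1) ^ 2 / (2 * (n : ℝ) ^ 2)) := sum_add_distrib.symm
    _ ≤ ∑ i, (-Real.log (lam i)) := sum_le_sum fun i _ =>
        one_sub_add_sq_div_le_neg_log (hpos i) (hle i) (Nat.one_le_cast.mpr i.pos)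

/-- For `λᵢ > 0` with `∑ λᵢ ≤ n`, one has `∑ (-log λᵢ) ≥ (1/(2n²)) ∑ (λᵢ - 1)²`. -/
theorem stmt4 (n : ℕ) (hn : 0 < n) (lam : Fin n → ℝ) (hpos : ∀ i, 0 < lam i)
    (hsum : ∑ i, lam i ≤ (n : ℝ)) :
    (1 / (2 * (n : ℝ) ^ 2)) * ∑ i, (lam i - 1) ^ 2 ≤ ∑ i, (-Real.log (lam i)) :=
  stmt4_general n lam hpos hsum
end

section
/- Let g, h : ℝⁿ → [0,∞) be probability densities and suppose T : ℝⁿ → ℝⁿ is a C¹ diffeomorphism with (T)_#(g dx) = h dx, satisfying the change-of-variables equation g(x) = h(T(x)) |det ∇T(x)| and |det ∇T(x)| ≤ 1 for all x. Then for every convex function φ : [0,∞) → ℝ with φ(0) = 0, ∫ φ(g(x)) dx ≤ ∫ φ(h(y)) dy. -/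
/-!
Changing variables `y = T x` writes `∫ φ(h)` as `∫ |det ∇T(x)| φ(h(T x)) dx`. Pointwise,
`g(x) = λ h(T x)` with `λ = |det ∇T(x)| ∈ [0, 1]`, and a convex `φ` vanishing at `0` satisfies
`φ(λ s) ≤ λ φ(s)` (convexity between `0` and `s`), so the integrands compare.
-/

open MeasureTheory Function

theorem ConvexOn.map_smul_le_of_map_zero {𝕜 E β : Type*} [Ring 𝕜] [PartialOrder 𝕜]
    [IsOrderedRing 𝕜] [AddCommGroup E] [Module 𝕜 E] [AddCommGroup β] [PartialOrder β]
    [Module 𝕜 β] {s : Set E} {f : E → β} (hf : ConvexOn 𝕜 s f) (h₀ : (0 : E) ∈ s)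
    (hf₀ : f 0 = 0) {x : E} (hx : x ∈ s) {t : 𝕜} (ht₀ : 0 ≤ t) (ht₁ : t ≤ 1) :
    f (t • x) ≤ t • f x := by
  simpa [hf₀] using hf.2 hx h₀ ht₀ (sub_nonneg.2 ht₁) (add_sub_cancel t 1)

section ChangeOfVariables

variable {E F : Type*} [NormedAddCommGroup E] [NormedSpace ℝ E] [FiniteDimensional ℝ E]
  [MeasurableSpace E] [BorelSpace E] (μ : Measure E) [μ.IsAddHaarMeasure]
  [NormedAddCommGroup F] [NormedSpace ℝ F] {f : E → E}

theorem integrable_abs_det_fderiv_smul_comp_iff (hf : Differentiable ℝ f) (hbij : Bijective f)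
    (g : E → F) :
    Integrable (fun x => |(fderiv ℝ f x).det| • g (f x)) μ ↔ Integrable g μ := by
  have := integrableOn_image_iff_integrableOn_abs_det_fderiv_smul μ MeasurableSet.univ
    (fun x _ => (hf x).hasFDerivAt.hasFDerivWithinAt) hbij.1.injOn g
  rwa [Set.image_univ, hbij.2.range_eq, integrableOn_univ, integrableOn_univ, Iff.comm] at this

theorem integral_abs_det_fderiv_smul_comp (hf : Differentiable ℝ f) (hbij : Bijective f)
    (g : E → F) :
    ∫ x, |(fderiv ℝ f x).det| • g (f x) ∂μ = ∫ y, g y ∂μ := by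
  have := integral_image_eq_integral_abs_det_fderiv_smul μ MeasurableSet.univ
    (fun x _ => (hf x).hasFDerivAt.hasFDerivWithinAt) hbij.1.injOn g
  rwa [Set.image_univ, hbij.2.range_eq, setIntegral_univ, setIntegral_univ, eq_comm] at this

end ChangeOfVariables

theorem stmt18_general (n : ℕ)
    (g h : EuclideanSpace ℝ (Fin n) → ℝ)
    (hhnonneg : ∀ x, 0 ≤ h x)
    (T : EuclideanSpace ℝ (Fin n) → EuclideanSpace ℝ (Fin n))
    (hT : ContDiff ℝ 1 T) (hbij : Function.Bijective T)
    (hchange : ∀ x, g x = h (T x) * |(fderiv ℝ T x).det|)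
    (hdet : ∀ x, |(fderiv ℝ T x).det| ≤ 1) :
    ∀ φ : ℝ → ℝ, ConvexOn ℝ (Set.Ici 0) φ → φ 0 = 0 →
      Integrable (fun x => φ (g x)) volume → Integrable (fun y => φ (h y)) volume →
      ∫ x, φ (g x) ≤ ∫ y, φ (h y) := by
  intro φ hφ hφ₀ hφg hφh
  have hTdiff : Differentiable ℝ T := hT.differentiable one_ne_zero
  rw [← integral_abs_det_fderiv_smul_comp volume hTdiff hbij (fun y => φ (h y))]
  refine integral_mono hφg ((integrable_abs_det_fderiv_smul_comp_iff volume hTdiff hbij _).2 hφh)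
    fun x => ?_
  calc φ (g x) = φ (|(fderiv ℝ T x).det| • h (T x)) := by rw [hchange, smul_eq_mul, mul_comm]
    _ ≤ |(fderiv ℝ T x).det| • φ (h (T x)) :=
      hφ.map_smul_le_of_map_zero Set.self_mem_Ici hφ₀ (hhnonneg _) (abs_nonneg _) (hdet x)

/-- Melbourne–Roberto: if `T` is a `C¹` diffeomorphism transporting `g dx` to `h dx`
with `g(x) = h(T x)|det ∇T(x)|` and `|det ∇T| ≤ 1`, then for every convex
`φ : [0,∞) → ℝ` with `φ(0) = 0` (and the relevant integrability),
`∫ φ(g) ≤ ∫ φ(h)`. -/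
theorem stmt18 (n : ℕ)
    (g h : EuclideanSpace ℝ (Fin n) → ℝ)
    (hgmeas : Measurable g) (hhmeas : Measurable h)
    (hgnonneg : ∀ x, 0 ≤ g x) (hhnonneg : ∀ x, 0 ≤ h x)
    (hgprob : ∫ x, g x = 1) (hhprob : ∫ x, h x = 1)
    (T : EuclideanSpace ℝ (Fin n) → EuclideanSpace ℝ (Fin n))
    (hT : ContDiff ℝ 1 T) (hbij : Function.Bijective T)
    (htransport : Measure.map T (volume.withDensity fun x => ENNReal.ofReal (g x))
      = volume.withDensity fun x => ENNReal.ofReal (h x))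
    (hchange : ∀ x, g x = h (T x) * |(fderiv ℝ T x).det|)
    (hdet : ∀ x, |(fderiv ℝ T x).det| ≤ 1) :
    ∀ φ : ℝ → ℝ, ConvexOn ℝ (Set.Ici 0) φ → φ 0 = 0 →
      Integrable (fun x => φ (g x)) volume → Integrable (fun y => φ (h y)) volume →
      ∫ x, φ (g x) ≤ ∫ y, φ (h y) :=
  stmt18_general n g h hhnonneg T hT hbij hchange hdet
end

section
/- Suppose V : ℝⁿ → ℝ is measurable, e^{−V} is integrable, and x ↦ α|x−x₀|²/2 − V(x) defines a subharmonic function for every x₀ ∈ ℝⁿ (equivalently Δ V ≤ αn distributionally), where α > 0. Then for every x₀ with |x₀| > R, e^{−V(x₀)} ≤ (e^{α/2}/Vol(B₁)) ∫_{|x| ≥ R−1} e^{−V(x)} dx; consequently V(x₀) → ∞ as |x₀| → ∞. -/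
open MeasureTheory Metric Filter Topology

/-! The sub-mean-value inequality on the unit ball around `x₀`, with the Gaussian weight bounded
there by `e^{α/2}`, gives `e^{-V(x₀)} ≤ (e^{α/2}/|B₁|) ∫_{B₁(x₀)} e^{-V}`. For `R < |x₀|` the ball
lies in `{R - 1 ≤ |x|}`, and these tails of the integrable function `e^{-V}` tend to `0`, so
`e^{-V(x₀)} → 0` as `|x₀| → ∞`. -/

section

variable {E : Type*} [NormedAddCommGroup E]

theorem ball_subset_setOf_le_norm {x₀ : E} {R r : ℝ} (hR : R ≤ ‖x₀‖) :
    ball x₀ r ⊆ {x | R - r ≤ ‖x‖} := fun x hx => by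
  have := norm_sub_norm_le x₀ x
  rw [mem_ball, dist_comm, dist_eq_norm] at hx
  show R - r ≤ ‖x‖
  linarith

variable [MeasurableSpace E] [BorelSpace E] {μ : Measure E}

theorem tendsto_setIntegral_setOf_le_norm {f : E → ℝ} (hf : Integrable f μ) :
    Tendsto (fun c : ℝ => ∫ x in {x | c ≤ ‖x‖}, f x ∂μ) atTop (𝓝 0) := by
  have hempty : (⋂ c : ℝ, {x : E | c ≤ ‖x‖}) = ∅ :=
    Set.eq_empty_of_forall_notMem fun x hx =>
      (lt_add_one ‖x‖).not_ge (Set.mem_iInter.1 hx (‖x‖ + 1))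
  simpa [hempty] using tendsto_setIntegral_of_antitone
    (fun c => (isClosed_le continuous_const continuous_norm).measurableSet)
    (fun c c' hcc' x (hx : c' ≤ ‖x‖) => hcc'.trans hx) ⟨0, hf.integrableOn⟩

theorem setIntegral_ball_exp_sq_sub_le {α r : ℝ} (hα : 0 ≤ α) {V : E → ℝ} {x₀ : E}
    (hint : IntegrableOn (fun x => Real.exp (-V x)) (ball x₀ r) μ) :
    ∫ x in ball x₀ r, Real.exp (α * ‖x - x₀‖ ^ 2 / 2 - V x) ∂μ ≤
      Real.exp (α * r ^ 2 / 2) * ∫ x in ball x₀ r, Real.exp (-V x) ∂μ := by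
  rw [← integral_const_mul]
  refine integral_mono_of_nonneg (.of_forall fun x => (Real.exp_pos _).le)
    (hint.const_mul _) ((ae_restrict_iff' measurableSet_ball).2 (.of_forall ?_))
  intro x hx
  rw [mem_ball, dist_eq_norm] at hx
  have hsq : ‖x - x₀‖ ^ 2 ≤ r ^ 2 := pow_le_pow_left₀ (norm_nonneg _) hx.le 2
  dsimp only
  rw [← Real.exp_add, Real.exp_le_exp]
  nlinarith

variable [μ.IsAddHaarMeasure]

theorem exp_neg_le_mul_setIntegral_of_le_setAverage {α r R : ℝ} (hα : 0 ≤ α) {V : E → ℝ}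
    (hint : Integrable (fun x => Real.exp (-V x)) μ) {x₀ : E}
    (hsub : Real.exp (-V x₀) ≤
      ⨍ x in ball x₀ r, Real.exp (α * ‖x - x₀‖ ^ 2 / 2 - V x) ∂μ)
    (hR : R ≤ ‖x₀‖) :
    Real.exp (-V x₀) ≤ Real.exp (α * r ^ 2 / 2) / μ.real (ball 0 r) *
      ∫ x in {x | R - r ≤ ‖x‖}, Real.exp (-V x) ∂μ := by
  rw [setAverage_eq, smul_eq_mul, μ.addHaar_real_ball_center] at hsub
  set w := Real.exp (α * r ^ 2 / 2)
  calc Real.exp (-V x₀)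
      ≤ (μ.real (ball 0 r))⁻¹ * (w * ∫ x in ball x₀ r, Real.exp (-V x) ∂μ) :=
        hsub.trans <| by gcongr; exact setIntegral_ball_exp_sq_sub_le hα hint.integrableOn
    _ ≤ (μ.real (ball 0 r))⁻¹ * (w * ∫ x in {x | R - r ≤ ‖x‖}, Real.exp (-V x) ∂μ) := by
        gcongr ?_ * (_ * ?_)
        exact setIntegral_mono_set hint.integrableOn (.of_forall fun x => (Real.exp_pos _).le)
          (ball_subset_setOf_le_norm hR).eventuallyLE
    _ = _ := by ring

end

theorem stmt19_general (n : ℕ) (α : ℝ) (hα : 0 < α)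
    (V : EuclideanSpace ℝ (Fin n) → ℝ)
    (hint : Integrable (fun x => Real.exp (-V x)) volume)
    (hsub : ∀ x₀ : EuclideanSpace ℝ (Fin n), ∀ r > (0 : ℝ),
      Real.exp (-V x₀) ≤
        ⨍ x in ball x₀ r, Real.exp (α * ‖x - x₀‖ ^ 2 / 2 - V x) ∂volume) :
    (∀ R : ℝ, ∀ x₀ : EuclideanSpace ℝ (Fin n), R < ‖x₀‖ →
      Real.exp (-V x₀) ≤
        (Real.exp (α / 2) / (volume (ball (0 : EuclideanSpace ℝ (Fin n)) 1)).toReal) *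
          ∫ x in {x : EuclideanSpace ℝ (Fin n) | R - 1 ≤ ‖x‖}, Real.exp (-V x)) ∧
    Tendsto V (cocompact (EuclideanSpace ℝ (Fin n))) atTop := by
  have key R x₀ (hR : R < ‖x₀‖) := by
    simpa only [one_pow, mul_one] using
      exp_neg_le_mul_setIntegral_of_le_setAverage hα.le hint (hsub x₀ 1 one_pos) hR.le
  refine ⟨key, ?_⟩
  have hnorm :
      Tendsto (fun x₀ : EuclideanSpace ℝ (Fin n) => ‖x₀‖ - 1 - 1) (cocompact _) atTop := by
    simpa only [sub_eq_add_neg] using tendsto_atTop_add_const_right _ (-1) <|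
      tendsto_atTop_add_const_right _ (-1) tendsto_norm_cocompact_atTop
  have htail := ((tendsto_setIntegral_setOf_le_norm hint).comp hnorm).const_mul
    (Real.exp (α / 2) / volume.real (ball (0 : EuclideanSpace ℝ (Fin n)) 1))
  rw [mul_zero] at htail
  have hexp : Tendsto (fun x => Real.exp (-V x)) (cocompact _) (𝓝 0) :=
    tendsto_of_tendsto_of_tendsto_of_le_of_le tendsto_const_nhds htail
      (fun x => (Real.exp_pos _).le) (fun x₀ => key _ x₀ (sub_one_lt _))
  exact tendsto_neg_atBot_iff.1 (Real.tendsto_exp_comp_nhds_zero.1 hexp)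

/-- If `e^{-V}` is integrable and, for every `x₀`, the function
`x ↦ e^{α|x-x₀|²/2 - V(x)}` is subharmonic (encoded by the sub-mean-value inequality
over balls), then for every `x₀` with `|x₀| > R`,
`e^{-V(x₀)} ≤ (e^{α/2}/Vol(B₁)) ∫_{|x| ≥ R-1} e^{-V}`; consequently `V(x₀) → ∞`
as `|x₀| → ∞`. -/
theorem stmt19 (n : ℕ) (hn : 0 < n) (α : ℝ) (hα : 0 < α)
    (V : EuclideanSpace ℝ (Fin n) → ℝ) (hmeas : Measurable V)
    (hint : Integrable (fun x => Real.exp (-V x)) volume)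
    (hsub : ∀ x₀ : EuclideanSpace ℝ (Fin n), ∀ r > (0 : ℝ),
      Real.exp (-V x₀) ≤
        ⨍ x in ball x₀ r, Real.exp (α * ‖x - x₀‖ ^ 2 / 2 - V x) ∂volume) :
    (∀ R : ℝ, ∀ x₀ : EuclideanSpace ℝ (Fin n), R < ‖x₀‖ →
      Real.exp (-V x₀) ≤
        (Real.exp (α / 2) / (volume (ball (0 : EuclideanSpace ℝ (Fin n)) 1)).toReal) *
          ∫ x in {x : EuclideanSpace ℝ (Fin n) | R - 1 ≤ ‖x‖}, Real.exp (-V x)) ∧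
    Tendsto V (cocompact (EuclideanSpace ℝ (Fin n))) atTop :=
  stmt19_general n α hα V hint hsub
end
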